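/- Let X be a complex of finitely generated modules over a commutative Noetherian local ring R with s = sup(X) < ∞ (where sup(X) = sup{n : H_n(X) ≠ 0}). If depth_R(H_s(X)) ≤ 1, then depth_R(X) = depth_R(H_s(X)) − s. -/

import Mathlib

open CategoryTheory

/-- Cochain complexes of `R`-modules indexed by `ℤ` (cohomological indexing; the homological
degree `n` corresponds to the cohomological degree `-n`). -/
abbrev Cx (R : Type) [CommRing R] := CochainComplex (ModuleCat.{0} R) ℤ

/-- Reindexing of an `ℕ`-indexed chain complex as a `ℤ`-indexed cochain complex
(placed in nonpositive cohomological degrees). -/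
noncomputable def chainToCochain (R : Type) [CommRing R] :
    ChainComplex (ModuleCat.{0} R) ℕ ⥤ Cx R :=
  ComplexShape.embeddingDownNat.extendFunctor _

/-- A chosen projective resolution of the residue field `k`, as a `ℤ`-indexed cochain
complex of projectives. -/
noncomputable def kRes (R : Type) [CommRing R] [IsLocalRing R] : Cx R :=
  (chainToCochain R).obj
    (projectiveResolution (ModuleCat.of R (IsLocalRing.ResidueField R))).complex

/-- The depth of a complex `Y` in the sense of Foxby–Iyengar: `depth_R Y = −sup RHom_R(k, Y)`.
Here `H^n(RHom_R(k, Y))` is computed as the group of homotopy classes of maps from a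
projective resolution of `k` to `Y⟦n⟧`, and the depth is the infimum of the set of `n : ℤ`
for which this group is nonzero (`⊤` if there is no such `n`, e.g. for an acyclic complex,
matching `depth 0 = ∞`). -/
noncomputable def cxDepth (R : Type) [CommRing R] [IsLocalRing R] (Y : Cx R) : WithTop ℤ :=
  sInf {e : WithTop ℤ | ∃ n : ℤ, e = (n : ℤ) ∧
    ∃ f : (HomotopyCategory.quotient (ModuleCat.{0} R) (ComplexShape.up ℤ)).obj (kRes R) ⟶
      ((HomotopyCategory.quotient (ModuleCat.{0} R) (ComplexShape.up ℤ)).obj Y)⟦n⟧, f ≠ 0}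

/-- A module, viewed as a complex concentrated in degree `0`. -/
noncomputable def singleCx (R : Type) [CommRing R] (A : ModuleCat.{0} R) : Cx R :=
  (HomologicalComplex.single (ModuleCat.{0} R) (ComplexShape.up ℤ) 0).obj A

/-- The depth of a `ModuleCat` object, via its associated complex. -/
noncomputable def sDepthM (R : Type) [CommRing R] [IsLocalRing R] (A : ModuleCat.{0} R) :
    WithTop ℤ :=
  cxDepth R (singleCx R A)

/-- The depth of a module, via its associated complex. -/
noncomputable def sDepth (R : Type) [CommRing R] [IsLocalRing R]
    (M : Type) [AddCommGroup M] [Module R M] : WithTop ℤ :=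
  sDepthM R (ModuleCat.of R M)

/-- The derived tensor product `M ⊗^L_R N`, realized as the complex `P ⊗_R N`, where `P` is a
chosen projective resolution of `M`. -/
noncomputable def dTensor (R : Type) [CommRing R] (M : Type) [AddCommGroup M] [Module R M]
    (N : Type) [AddCommGroup N] [Module R N] : Cx R :=
  (chainToCochain R).obj
    (((MonoidalCategory.tensorRight (ModuleCat.of R N)).mapHomologicalComplex
        (ComplexShape.down ℕ)).obj
      (projectiveResolution (ModuleCat.of R M)).complex)


namespace Stmt5
open HomologicalComplex Limits

variable {R : Type} [CommRing R] [IsLocalRing R]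


lemma projective_of_isZero {C : Type*} [Category C] [Limits.HasZeroMorphisms C]
    {Z : C} (h : IsZero Z) : Projective Z :=
  ⟨fun f e _ => ⟨0, by rw [h.eq_of_src f 0, zero_comp]⟩⟩

lemma isZero_kRes_X (j : ℤ) (hj : 0 < j) : IsZero ((kRes R).X j) := by
  refine HomologicalComplex.isZero_extend_X _ _ j (fun i hi => ?_)
  simp only [ComplexShape.embeddingDownNat_f] at hi
  omega

noncomputable instance kRes_X_projective (j : ℤ) : Projective ((kRes R).X j) := by
  by_cases hj : 0 < j
  · exact projective_of_isZero (isZero_kRes_X j hj)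
  · refine Projective.of_iso
      (((projectiveResolution (ModuleCat.of R (IsLocalRing.ResidueField R))).complex.extendXIso
        ComplexShape.embeddingDownNat
        (show ComplexShape.embeddingDownNat.f (-j).toNat = j by
          simp only [ComplexShape.embeddingDownNat_f]; omega)).symm) inferInstance

/-- Non-vanishing of the group of homotopy classes of maps from `kRes R`. -/
def Nv (Z : Cx R) : Prop := ∃ g : kRes R ⟶ Z, ¬ Nonempty (Homotopy g 0)

lemma nv_of_iso {Z Z' : Cx R} (e : Z ≅ Z') (h : Nv Z) : Nv Z' := by
  obtain ⟨g, hg⟩ := h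
  refine ⟨g ≫ e.hom, fun ⟨H⟩ => hg ⟨?_⟩⟩
  exact (Homotopy.ofEq (by simp)).trans (((H.compRight e.inv).trans (Homotopy.ofEq (by simp))))

lemma nv_iff_of_iso {Z Z' : Cx R} (e : Z ≅ Z') : Nv Z ↔ Nv Z' :=
  ⟨nv_of_iso e, nv_of_iso e.symm⟩

lemma bridge (Y : Cx R) (n : ℤ) :
    (∃ f : (HomotopyCategory.quotient (ModuleCat.{0} R) (ComplexShape.up ℤ)).obj (kRes R) ⟶
      ((HomotopyCategory.quotient (ModuleCat.{0} R) (ComplexShape.up ℤ)).obj Y)⟦n⟧, f ≠ 0) ↔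
    Nv ((CategoryTheory.shiftFunctor (Cx R) n).obj Y) := by
  set Q := HomotopyCategory.quotient (ModuleCat.{0} R) (ComplexShape.up ℤ) with hQ
  let e : Q.obj ((CategoryTheory.shiftFunctor (Cx R) n).obj Y) ≅ (Q.obj Y)⟦n⟧ :=
    (Q.commShiftIso n).app Y
  constructor
  · rintro ⟨f, hf⟩
    obtain ⟨g, hg⟩ := Q.map_surjective (f ≫ e.inv)
    refine ⟨g, fun ⟨H⟩ => hf ?_⟩
    have h1 : Q.map g = 0 := by
      rw [HomotopyCategory.eq_of_homotopy _ _ H, Functor.map_zero]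
    rw [hg] at h1
    have : f = (f ≫ e.inv) ≫ e.hom := by simp
    rw [this, h1, zero_comp]
  · rintro ⟨g, hg⟩
    refine ⟨Q.map g ≫ e.hom, fun h0 => hg ⟨HomotopyCategory.homotopyOfEq _ _ ?_⟩⟩
    have : Q.map g = 0 := by
      have : Q.map g = (Q.map g ≫ e.hom) ≫ e.inv := by simp
      rw [this, h0, zero_comp]
    rw [this, Functor.map_zero]

lemma cxDepth_set_eq (Y : Cx R) :
    {e : WithTop ℤ | ∃ n : ℤ, e = (n : ℤ) ∧
      ∃ f : (HomotopyCategory.quotient (ModuleCat.{0} R) (ComplexShape.up ℤ)).obj (kRes R) ⟶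
        ((HomotopyCategory.quotient (ModuleCat.{0} R) (ComplexShape.up ℤ)).obj Y)⟦n⟧, f ≠ 0}
    = {e : WithTop ℤ | ∃ n : ℤ, e = (n : ℤ) ∧
        Nv ((CategoryTheory.shiftFunctor (Cx R) n).obj Y)} := by
  ext e
  simp only [Set.mem_setOf_eq]
  exact exists_congr (fun n => and_congr_right (fun _ => bridge Y n))



lemma lift_step' (W : Cx R) {i j k : ℤ} (hij : i + 1 = j) (hjk : j + 1 = k)
    (hW : W.ExactAt j) {A : ModuleCat.{0} R} [Projective A]
    (θ : A ⟶ W.X j) (hθ : θ ≫ W.d j k = 0) :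
    ∃ u : A ⟶ W.X i, u ≫ W.d i j = θ := by
  rw [W.exactAt_iff' i j k (by simp; omega) (by simp; omega)] at hW
  exact ⟨hW.liftFromProjective θ hθ, hW.liftFromProjective_comp θ hθ⟩



lemma hl (W : Cx R) {i r : ℤ} (hir : i + 1 = r) {A : ModuleCat.{0} R} [Projective A]
    (cA : A ⟶ W.cycles r) (hc : cA ≫ W.homologyπ r = 0) :
    ∃ u : A ⟶ W.X i, u ≫ W.toCycles i r = cA := by
  have hcl := W.homologyIsCokernel i r (by simp; omega)
  have hex : (ShortComplex.mk (W.toCycles i r) (W.homologyπ r)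
      (W.toCycles_comp_homologyπ i r)).Exact := ShortComplex.exact_of_g_is_cokernel _ hcl
  exact ⟨hex.liftFromProjective cA hc, hex.liftFromProjective_comp cA hc⟩

lemma toNat_bound (i : ℤ) : -(((-i).toNat : ℕ) : ℤ) - 2 ≤ i := by
  rcases le_or_gt i 0 with h | h
  · rw [Int.toNat_of_nonneg (by omega)]; omega
  · rw [Int.toNat_of_nonpos (by omega)]; omega



/-- invariant for the extension construction -/
def MelInv (W : Cx R) (m : ℕ) (gm : ∀ i : ℤ, (kRes R).X i ⟶ W.X i) : Prop :=
  ∀ i : ℤ, -(m:ℤ) - 2 ≤ i → gm i ≫ W.d i (i+1) = (kRes R).d i (i+1) ≫ gm (i+1)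

/-- Master extension lemma. -/
lemma mel (W : Cx R) (hex : ∀ i : ℤ, i ≤ -2 → W.ExactAt i)
    (f0 : (kRes R).X 0 ⟶ W.X 0) (hf0 : f0 ≫ W.d 0 1 = 0)
    (fm1 : (kRes R).X (-1) ⟶ W.X (-1)) (hfm1 : fm1 ≫ W.d (-1) 0 = (kRes R).d (-1) 0 ≫ f0)
    (fm2 : (kRes R).X (-2) ⟶ W.X (-2)) (hfm2 : fm2 ≫ W.d (-2) (-1) = (kRes R).d (-2) (-1) ≫ fm1) :
    ∃ g : kRes R ⟶ W, g.f 0 = f0 ∧ g.f (-1) = fm1 := by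
  classical
  set G0 : ∀ i : ℤ, (kRes R).X i ⟶ W.X i := fun i =>
    if h : i = 0 then ((kRes R).XIsoOfEq h).hom ≫ f0 ≫ (W.XIsoOfEq h.symm).hom
    else if h : i = -1 then ((kRes R).XIsoOfEq h).hom ≫ fm1 ≫ (W.XIsoOfEq h.symm).hom
    else if h : i = -2 then ((kRes R).XIsoOfEq h).hom ≫ fm2 ≫ (W.XIsoOfEq h.symm).hom
    else 0
    with hG0
  have hG0_0 : G0 0 = f0 := by simp [hG0]
  have hG0_m1 : G0 (-1) = fm1 := by norm_num [hG0]
  have hG0_m2 : G0 (-2) = fm2 := by norm_num [hG0]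
  have hG0_pos : ∀ i : ℤ, 0 < i → G0 i = 0 := by
    intro i hi
    have h0 : ¬ (i = 0) := by omega
    have h1 : ¬ (i = -1) := by omega
    have h2 : ¬ (i = -2) := by omega
    simp [hG0, h0, h1, h2]
  have inv0 : MelInv W 0 G0 := by
    intro i hi
    norm_num at hi
    rcases (by omega : i = -2 ∨ i = -1 ∨ i = 0 ∨ 0 < i) with rfl | rfl | rfl | hpos
    · rw [hG0_m2, show (-2:ℤ) + 1 = -1 by norm_num, hG0_m1]; exact hfm2
    · rw [hG0_m1, show (-1:ℤ) + 1 = 0 by norm_num, hG0_0]; exact hfm1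
    · rw [hG0_0, show (0:ℤ) + 1 = 1 by norm_num, hG0_pos 1 one_pos, comp_zero]; exact hf0
    · exact (isZero_kRes_X i hpos).eq_of_src _ _
  have hstep : ∀ (m : ℕ) (gm : ∀ i : ℤ, (kRes R).X i ⟶ W.X i), MelInv W m gm →
      ∃ gm' : ∀ i : ℤ, (kRes R).X i ⟶ W.X i, MelInv W (m+1) gm' ∧
        ∀ i : ℤ, -(m:ℤ) - 2 ≤ i → gm' i = gm i := by
    intro m gm hgm
    have hθ : ((kRes R).d (-(m:ℤ)-3) (-(m:ℤ)-3+1) ≫ gm (-(m:ℤ)-3+1)) ≫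
        W.d (-(m:ℤ)-3+1) (-(m:ℤ)-3+1+1) = 0 := by
      rw [Category.assoc, hgm (-(m:ℤ)-3+1) (by omega), ← Category.assoc,
        (kRes R).d_comp_d, zero_comp]
    obtain ⟨u, hu⟩ := lift_step' W (show (-(m:ℤ)-3) + 1 = (-(m:ℤ)-3) + 1 by rfl) rfl
      (hex (-(m:ℤ)-3+1) (by omega)) _ hθ
    refine ⟨fun i => if h : i = -(m:ℤ)-3 then
        ((kRes R).XIsoOfEq h).hom ≫ u ≫ (W.XIsoOfEq h.symm).hom
      else gm i, ?_, ?_⟩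
    · intro i hi
      have hi' : -(m:ℤ)-3 ≤ i := by push_cast at hi; omega
      by_cases h : i = -(m:ℤ)-3
      · subst h
        beta_reduce
        rw [dif_pos rfl, dif_neg (by omega)]
        simp only [HomologicalComplex.XIsoOfEq, eqToIso.hom, eqToHom_refl,
          Category.comp_id, Category.id_comp]
        exact hu
      · beta_reduce
        rw [dif_neg h, dif_neg (by omega)]
        exact hgm i (by omega)
    · intro i hi
      beta_reduce
      rw [dif_neg (by omega)]
  choose F hF1 hF2 using hstep
  let seq : ∀ m : ℕ, Σ' gm : ∀ i : ℤ, (kRes R).X i ⟶ W.X i, MelInv W m gm :=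
    fun m => Nat.rec ⟨G0, inv0⟩ (fun m p => ⟨F m p.1 p.2, hF1 m p.1 p.2⟩) m
  have hseq0 : seq 0 = ⟨G0, inv0⟩ := rfl
  have hseqS : ∀ m : ℕ, (seq (m+1)).1 = F m (seq m).1 (seq m).2 := fun m => rfl
  have stab : ∀ (m m' : ℕ), m ≤ m' → ∀ i : ℤ, -(m:ℤ) - 2 ≤ i →
      (seq m').1 i = (seq m).1 i := by
    intro m m' hmm'
    induction m' , hmm' using Nat.le_induction with
    | base => intro i _; rfl
    | succ m' hmm' ih =>
      intro i hi
      exact (congrFun (hseqS m') i).trans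
        ((hF2 m' (seq m').1 (seq m').2 i (by push_cast at hi ⊢; omega)).trans (ih i hi))
  refine ⟨⟨fun i => (seq ((-i).toNat)).1 i, ?_⟩, ?_, ?_⟩
  · intro i j hij
    have hj : i + 1 = j := hij
    subst hj
    beta_reduce
    have e2 : (seq ((-(i+1)).toNat)).1 (i+1) = (seq ((-i).toNat)).1 (i+1) :=
      (stab ((-(i+1)).toNat) ((-i).toNat) (Int.toNat_le_toNat (by omega)) (i+1)
        (toNat_bound (i+1))).symm
    rw [e2]
    exact (seq ((-i).toNat)).2 i (toNat_bound i)
  · show (seq ((-(0:ℤ)).toNat)).1 0 = f0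
    rw [show ((-(0:ℤ)).toNat) = 0 by norm_num, hseq0]
    exact hG0_0
  · show (seq ((-(-1:ℤ)).toNat)).1 (-1) = fm1
    rw [show ((-(-1:ℤ)).toNat) = 1 by norm_num,
      stab 0 1 (by omega) (-1) (by norm_num), hseq0]
    exact hG0_m1



lemma toNat_bound0 (i : ℤ) : -(((-i).toNat : ℕ) : ℤ) ≤ i := by
  have := toNat_bound i; omega

def MlInv (W : Cx R) (g : kRes R ⟶ W) (m : ℕ)
    (hs : ∀ i : ℤ, (kRes R).X i ⟶ W.X (i-1)) : Prop :=
  ∀ i : ℤ, -(m:ℤ) ≤ i → g.f i =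
    (kRes R).d i (i+1) ≫ hs (i+1) ≫ (W.XIsoOfEq (show i+1-1 = i by omega)).hom
      + hs i ≫ W.d (i-1) i

/-- Master nullhomotopy lemma. -/
lemma ml (W : Cx R) (hex : ∀ i : ℤ, i ≤ -1 → W.ExactAt i) (g : kRes R ⟶ W)
    (h0 : (kRes R).X 0 ⟶ W.X (-1)) (hh0 : h0 ≫ W.d (-1) 0 = g.f 0) :
    Nonempty (Homotopy g 0) := by
  classical
  set H0 : ∀ i : ℤ, (kRes R).X i ⟶ W.X (i-1) := fun i =>
    if h : i = 0 then ((kRes R).XIsoOfEq h).hom ≫ h0 ≫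
      (W.XIsoOfEq (show (-1 : ℤ) = i - 1 by omega)).hom
    else 0
    with hH0
  have inv0 : MlInv W g 0 H0 := by
    intro i hi
    norm_num at hi
    rcases (by omega : i = 0 ∨ 0 < i) with rfl | hpos
    · have e1 : H0 ((0:ℤ)+1) = 0 := by
        simp only [hH0]; rw [dif_neg (by norm_num)]
      have hH0_0 : H0 0 = h0 ≫ (W.XIsoOfEq (show (-1:ℤ) = 0-1 by norm_num)).hom := by
        simp [hH0, HomologicalComplex.XIsoOfEq]
      have e2 : H0 (0:ℤ) ≫ W.d (0-1) 0 = g.f 0 := by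
        rw [hH0_0, Category.assoc,
          HomologicalComplex.XIsoOfEq_hom_comp_d W (show (-1:ℤ) = 0-1 by norm_num) 0]
        exact hh0
      rw [e1, e2]
      simp
    · exact (isZero_kRes_X i hpos).eq_of_src _ _
  have hstep : ∀ (m : ℕ) (hs : ∀ i : ℤ, (kRes R).X i ⟶ W.X (i-1)), MlInv W g m hs →
      ∃ hs' : ∀ i : ℤ, (kRes R).X i ⟶ W.X (i-1), MlInv W g (m+1) hs' ∧
        ∀ i : ℤ, -(m:ℤ) ≤ i → hs' i = hs i := by
    intro m hs hgm
    set i₀ : ℤ := -(m:ℤ) - 1 with hi₀def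
    have hθ : (g.f i₀ - (kRes R).d i₀ (i₀+1) ≫ hs (i₀+1) ≫
        (W.XIsoOfEq (show i₀+1-1 = i₀ by omega)).hom) ≫ W.d i₀ (i₀+1) = 0 := by
      rw [Preadditive.sub_comp, g.comm i₀ (i₀+1), hgm (i₀+1) (by omega)]
      simp only [Category.assoc,
        HomologicalComplex.XIsoOfEq_hom_comp_d W (show i₀+1-1 = i₀ by omega) (i₀+1)]
      rw [Preadditive.comp_add]
      rw [← Category.assoc ((kRes R).d i₀ (i₀+1)) ((kRes R).d (i₀+1) (i₀+1+1)),
        (kRes R).d_comp_d, zero_comp]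
      abel
    obtain ⟨u, hu⟩ := lift_step' W (show i₀ - 1 + 1 = i₀ by omega) rfl
      (hex i₀ (by omega)) _ hθ
    refine ⟨fun i => if h : i = i₀ then
        ((kRes R).XIsoOfEq h).hom ≫ u ≫ (W.XIsoOfEq (show i₀ - 1 = i - 1 by omega)).hom
      else hs i, ?_, ?_⟩
    · intro i hi
      have hi' : i₀ ≤ i := by push_cast at hi; omega
      by_cases h : i = i₀
      · subst h
        beta_reduce
        rw [dif_pos rfl, dif_neg (by omega)]
        simp only [HomologicalComplex.XIsoOfEq_rfl, Iso.refl_hom, Category.comp_id,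
          Category.id_comp]
        rw [hu]
        abel
      · beta_reduce
        rw [dif_neg h, dif_neg (by omega)]
        exact hgm i (by omega)
    · intro i hi
      beta_reduce
      rw [dif_neg (by omega)]
  choose F hF1 hF2 using hstep
  let seq : ∀ m : ℕ, Σ' hs : ∀ i : ℤ, (kRes R).X i ⟶ W.X (i-1), MlInv W g m hs :=
    fun m => Nat.rec ⟨H0, inv0⟩ (fun m p => ⟨F m p.1 p.2, hF1 m p.1 p.2⟩) m
  have hseqS : ∀ m : ℕ, (seq (m+1)).1 = F m (seq m).1 (seq m).2 := fun m => rfl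
  have stab : ∀ (m m' : ℕ), m ≤ m' → ∀ i : ℤ, -(m:ℤ) ≤ i →
      (seq m').1 i = (seq m).1 i := by
    intro m m' hmm'
    induction m' , hmm' using Nat.le_induction with
    | base => intro i _; rfl
    | succ m' hmm' ih =>
      intro i hi
      exact (congrFun (hseqS m') i).trans
        ((hF2 m' (seq m').1 (seq m').2 i (by push_cast at hi ⊢; omega)).trans (ih i hi))
  refine ⟨⟨fun i j => if h : j = i - 1 then
      (seq ((-i).toNat)).1 i ≫ (W.XIsoOfEq h.symm).hom else 0, ?_, ?_⟩⟩
  · intro i j hn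
    beta_reduce
    rw [dif_neg (fun h => hn (show j + 1 = i by omega))]
  · intro i
    rw [dNext_eq _ (show (ComplexShape.up ℤ).Rel i (i+1) from rfl),
      prevD_eq _ (show (ComplexShape.up ℤ).Rel (i-1) i by show i - 1 + 1 = i; omega)]
    beta_reduce
    rw [dif_pos (show i = (i+1) - 1 by omega), dif_pos rfl]
    simp only [HomologicalComplex.XIsoOfEq, eqToIso.hom, eqToHom_refl, Category.comp_id]
    have e2 : (seq ((-(i+1)).toNat)).1 (i+1) = (seq ((-i).toNat)).1 (i+1) :=
      (stab ((-(i+1)).toNat) ((-i).toNat) (Int.toNat_le_toNat (by omega)) (i+1)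
        (toNat_bound0 (i+1))).symm
    rw [e2]
    have hzero : (0 : kRes R ⟶ W).f i = 0 := rfl
    rw [hzero, add_zero]
    have := (seq ((-i).toNat)).2 i (toNat_bound0 i)
    rw [this]
    congr 1


noncomputable abbrev SGL (r : ℤ) (A : ModuleCat.{0} R) : Cx R :=
  (HomologicalComplex.single (ModuleCat.{0} R) (ComplexShape.up ℤ) r).obj A

noncomputable def ext0 {r : ℤ} {A : ModuleCat.{0} R} (φ : kRes R ⟶ SGL r A) :
    (kRes R).X r ⟶ A :=
  φ.f r ≫ (HomologicalComplex.singleObjXSelf (ComplexShape.up ℤ) r A).hom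

lemma ext0_cocycle {r : ℤ} {A : ModuleCat.{0} R} (φ : kRes R ⟶ SGL r A) :
    (kRes R).d (r-1) r ≫ ext0 φ = 0 := by
  rw [ext0, ← Category.assoc, ← HomologicalComplex.Hom.comm]
  simp


lemma sl_null_iff {r : ℤ} {A : ModuleCat.{0} R} (φ : kRes R ⟶ SGL r A) :
    Nonempty (Homotopy φ 0) ↔
      ∃ u : (kRes R).X (r+1) ⟶ A, ext0 φ = (kRes R).d r (r+1) ≫ u := by
  classical
  constructor
  · rintro ⟨H⟩
    refine ⟨H.hom (r+1) r ≫ (HomologicalComplex.singleObjXSelf (ComplexShape.up ℤ) r A).hom, ?_⟩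
    have hc := H.comm r
    rw [dNext_eq _ (show (ComplexShape.up ℤ).Rel r (r+1) from rfl),
      prevD_eq _ (show (ComplexShape.up ℤ).Rel (r-1) r by show r - 1 + 1 = r; omega)] at hc
    simp only [HomologicalComplex.single_obj_d, comp_zero, add_zero] at hc
    rw [show (0 : kRes R ⟶ SGL r A).f r = 0 from rfl, add_zero] at hc
    rw [ext0, hc, Category.assoc]
  · rintro ⟨u, hu⟩
    refine ⟨⟨fun i j => if h : i = r+1 ∧ j = r then
        ((kRes R).XIsoOfEq h.1).hom ≫ u ≫
          (HomologicalComplex.singleObjXSelf (ComplexShape.up ℤ) r A).inv ≫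
          ((SGL r A).XIsoOfEq h.2.symm).hom
      else 0, ?_, ?_⟩⟩
    · intro i j hn
      beta_reduce
      rw [dif_neg (by rintro ⟨rfl, rfl⟩; exact hn rfl)]
    · intro i
      rw [dNext_eq _ (show (ComplexShape.up ℤ).Rel i (i+1) from rfl),
        prevD_eq _ (show (ComplexShape.up ℤ).Rel (i-1) i by show i - 1 + 1 = i; omega)]
      beta_reduce
      by_cases hir : i = r
      · subst hir
        rw [dif_pos ⟨rfl, rfl⟩, dif_neg (by rintro ⟨h1, -⟩; omega)]
        simp only [HomologicalComplex.XIsoOfEq_rfl, Iso.refl_hom, Category.id_comp,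
          Category.comp_id, zero_comp, add_zero]
        rw [show (0 : kRes R ⟶ SGL i A).f i = 0 from rfl, add_zero]
        have hφ : φ.f i = ext0 φ ≫
            (HomologicalComplex.singleObjXSelf (ComplexShape.up ℤ) i A).inv := by
          rw [ext0, Category.assoc, Iso.hom_inv_id, Category.comp_id]
        rw [hφ, hu]
        simp [Category.assoc]
      · rw [dif_neg (by rintro ⟨-, h2⟩; exact hir h2)]
        simp only [HomologicalComplex.single_obj_d, comp_zero, zero_add, add_zero]
        rw [show (0 : kRes R ⟶ SGL r A).f i = 0 from rfl]
        exact (HomologicalComplex.isZero_single_obj_X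
          (ComplexShape.up ℤ) r A i hir).eq_of_tgt _ _

lemma nv_sgl_iff (r : ℤ) (A : ModuleCat.{0} R) :
    Nv (SGL r A) ↔ ∃ ψ : (kRes R).X r ⟶ A,
      ((kRes R).d (r-1) r ≫ ψ = 0) ∧
      ¬ ∃ u : (kRes R).X (r+1) ⟶ A, ψ = (kRes R).d r (r+1) ≫ u := by
  constructor
  · rintro ⟨g, hg⟩
    exact ⟨ext0 g, ext0_cocycle g, fun hu => hg ((sl_null_iff g).2 hu)⟩
  · rintro ⟨ψ, h1, h2⟩
    have hcond : ∀ b, (ComplexShape.up ℤ).Rel b r → (kRes R).d b r ≫ ψ = 0 := by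
      intro b hb
      obtain rfl : b = r - 1 := by have : b + 1 = r := hb; omega
      exact h1
    refine ⟨HomologicalComplex.mkHomToSingle ψ hcond, fun hn => h2 ?_⟩
    obtain ⟨u, hu⟩ := (sl_null_iff _).1 hn
    refine ⟨u, ?_⟩
    rw [← hu, ext0, HomologicalComplex.mkHomToSingle_f]
    simp
lemma nv_sgl_pos (r : ℤ) (hr : 0 < r) (A : ModuleCat.{0} R) : ¬ Nv (SGL r A) := by
  rw [nv_sgl_iff]
  rintro ⟨ψ, h1, h2⟩
  exact h2 ⟨0, by rw [(isZero_kRes_X r hr).eq_of_src ψ 0, comp_zero]⟩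


lemma kRes_d01 : (kRes R).d 0 1 = 0 := (isZero_kRes_X 1 one_pos).eq_of_tgt _ _

lemma k1 (W : Cx R) (hex : ∀ i : ℤ, i ≤ -1 → W.ExactAt i) :
    Nv W ↔ Nv (SGL 0 (W.homology 0)) := by
  constructor
  · rintro ⟨g, hg⟩
    have hg0d : g.f 0 ≫ W.d 0 1 = 0 := by
      rw [HomologicalComplex.Hom.comm, kRes_d01, zero_comp]
    set c : (kRes R).X 0 ⟶ W.cycles 0 := W.liftCycles (g.f 0) 1 (by simp) hg0d with hc
    have hpc : (kRes R).d (-1) 0 ≫ c = g.f (-1) ≫ W.toCycles (-1) 0 := by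
      rw [← cancel_mono (W.iCycles 0)]
      simp [hc, HomologicalComplex.Hom.comm]
    refine (nv_sgl_iff 0 _).2 ⟨c ≫ W.homologyπ 0, ?_, ?_⟩
    · rw [show (0:ℤ)-1 = -1 by norm_num, ← Category.assoc, hpc, Category.assoc,
        HomologicalComplex.toCycles_comp_homologyπ, comp_zero]
    · rintro ⟨u, hu⟩
      rw [(isZero_kRes_X (0+1) (by norm_num)).eq_of_tgt ((kRes R).d 0 (0+1)) 0,
        zero_comp] at hu
      obtain ⟨u', hu'⟩ := hl W (show (-1:ℤ) + 1 = 0 by norm_num) c hu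
      refine hg (ml W hex g u' ?_)
      rw [← W.toCycles_i (-1) 0, ← Category.assoc, hu']
      simp [hc]
  · rintro nv
    obtain ⟨ψ, h1, h2⟩ := (nv_sgl_iff 0 _).1 nv
    rw [show (0:ℤ)-1 = -1 by norm_num] at h1
    set c := Projective.factorThru ψ (W.homologyπ 0) with hcdef
    have hcψ : c ≫ W.homologyπ 0 = ψ := Projective.factorThru_comp _ _
    set f0 := c ≫ W.iCycles 0 with hf0def
    have hf0 : f0 ≫ W.d 0 1 = 0 := by
      rw [hf0def, Category.assoc, HomologicalComplex.iCycles_d, comp_zero]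
    have hcπ : ((kRes R).d (-1) 0 ≫ c) ≫ W.homologyπ 0 = 0 := by
      rw [Category.assoc, hcψ]; exact h1
    obtain ⟨v, hv⟩ := hl W (show (-1:ℤ)+1 = 0 by norm_num) _ hcπ
    have hfm1 : v ≫ W.d (-1) 0 = (kRes R).d (-1) 0 ≫ f0 := by
      rw [← W.toCycles_i (-1) 0, ← Category.assoc, hv, hf0def, Category.assoc]
    have hθ2 : ((kRes R).d (-2) (-1) ≫ v) ≫ W.d (-1) 0 = 0 := by
      rw [Category.assoc, hfm1, ← Category.assoc, (kRes R).d_comp_d, zero_comp]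
    obtain ⟨fm2, hfm2⟩ := lift_step' W (show (-2:ℤ)+1 = -1 by norm_num)
      (show (-1:ℤ)+1 = 0 by norm_num) (hex (-1) (le_refl _)) _ hθ2
    obtain ⟨g, hgf0, hgfm1⟩ := mel W (fun i hi => hex i (by omega)) f0 hf0 v hfm1 fm2 hfm2
    refine ⟨g, fun ⟨H⟩ => h2 ?_⟩
    have hcm := H.comm 0
    rw [dNext_eq _ (show (ComplexShape.up ℤ).Rel 0 (0+1) from rfl),
      prevD_eq _ (show (ComplexShape.up ℤ).Rel (0-1) 0 by show 0 - 1 + 1 = 0; norm_num),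
      show (0:ℤ)+1 = 1 by norm_num, show (0:ℤ)-1 = -1 by norm_num, kRes_d01, zero_comp,
      zero_add, show (0 : kRes R ⟶ W).f 0 = 0 from rfl, add_zero, hgf0] at hcm
    have hc2 : c = H.hom 0 (-1) ≫ W.toCycles (-1) 0 := by
      rw [← cancel_mono (W.iCycles 0), Category.assoc, W.toCycles_i, ← hcm, hf0def]
    refine ⟨0, ?_⟩
    rw [comp_zero, ← hcψ, hc2, Category.assoc, HomologicalComplex.toCycles_comp_homologyπ,
      comp_zero]

lemma k2 (W : Cx R) (hex : ∀ i : ℤ, i ≤ -2 → W.ExactAt i)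
    (hnv : Nv (SGL (-1) (W.homology (-1)))) : Nv W := by
  obtain ⟨ψ, h1, h2⟩ := (nv_sgl_iff _ _).1 hnv
  rw [show (-1:ℤ)-1 = -2 by norm_num] at h1
  set c := Projective.factorThru ψ (W.homologyπ (-1)) with hcdef
  have hcψ : c ≫ W.homologyπ (-1) = ψ := Projective.factorThru_comp _ _
  set fm1 := c ≫ W.iCycles (-1) with hfm1def
  have hfm1 : fm1 ≫ W.d (-1) 0 = (kRes R).d (-1) 0 ≫ (0 : (kRes R).X 0 ⟶ W.X 0) := by
    rw [hfm1def, Category.assoc, HomologicalComplex.iCycles_d, comp_zero, comp_zero]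
  have hcπ : ((kRes R).d (-2) (-1) ≫ c) ≫ W.homologyπ (-1) = 0 := by
    rw [Category.assoc, hcψ]; exact h1
  obtain ⟨fm2, hfm2'⟩ := hl W (show (-2:ℤ)+1 = -1 by norm_num) _ hcπ
  have hfm2 : fm2 ≫ W.d (-2) (-1) = (kRes R).d (-2) (-1) ≫ fm1 := by
    rw [← W.toCycles_i (-2) (-1), ← Category.assoc, hfm2', hfm1def, Category.assoc]
  obtain ⟨g, hg0, hgm1⟩ := mel W hex 0 (by simp) fm1 hfm1 fm2 hfm2
  refine ⟨g, fun ⟨H⟩ => h2 ?_⟩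
  have hcm0 := H.comm 0
  rw [dNext_eq _ (show (ComplexShape.up ℤ).Rel 0 (0+1) from rfl),
    prevD_eq _ (show (ComplexShape.up ℤ).Rel (0-1) 0 by show 0 - 1 + 1 = 0; norm_num),
    show (0:ℤ)+1 = 1 by norm_num, show (0:ℤ)-1 = -1 by norm_num, kRes_d01, zero_comp,
    zero_add, show (0 : kRes R ⟶ W).f 0 = 0 from rfl, add_zero, hg0] at hcm0
  -- hcm0 : 0 = H.hom 0 (-1) ≫ W.d (-1) 0
  have hlift : H.hom 0 (-1) ≫ W.d (-1) 0 = 0 := hcm0.symm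
  set hLift : (kRes R).X 0 ⟶ W.cycles (-1) := W.liftCycles (H.hom 0 (-1)) 0 (by simp) hlift
    with hhLift
  have hcm1 := H.comm (-1)
  rw [dNext_eq _ (show (ComplexShape.up ℤ).Rel (-1) (-1+1) from rfl),
    prevD_eq _ (show (ComplexShape.up ℤ).Rel (-1-1) (-1) by show -1 - 1 + 1 = -1; norm_num),
    show (-1:ℤ)+1 = 0 by norm_num, show (-1:ℤ)-1 = -2 by norm_num,
    show (0 : kRes R ⟶ W).f (-1) = 0 from rfl, add_zero, hgm1] at hcm1
  -- hcm1 : fm1 = P.d (-1) 0 ≫ H.hom 0 (-1) + H.hom (-1) (-2) ≫ W.d (-2) (-1)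
  have hc2 : c = (kRes R).d (-1) 0 ≫ hLift + H.hom (-1) (-2) ≫ W.toCycles (-2) (-1) := by
    rw [← cancel_mono (W.iCycles (-1)), Preadditive.add_comp, Category.assoc, Category.assoc,
      W.toCycles_i, hhLift, W.liftCycles_i, ← hcm1, hfm1def]
  refine ⟨hLift ≫ W.homologyπ (-1), ?_⟩
  show ψ = (kRes R).d (-1) 0 ≫ (hLift ≫ W.homologyπ (-1))
  rw [← hcψ, hc2]
  simp [Preadditive.add_comp, Category.assoc, HomologicalComplex.toCycles_comp_homologyπ]


lemma exactAt_shift (X : Cx R) (n i : ℤ) (h : X.ExactAt (n + i)) :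
    ((CategoryTheory.shiftFunctor (Cx R) n).obj X).ExactAt i := by
  rw [HomologicalComplex.exactAt_iff_isZero_homology] at h ⊢
  exact h.of_iso ((CochainComplex.ShiftSequence.shiftIso (ModuleCat.{0} R) n i (n+i) rfl).app X)

noncomputable def homologyShiftIso (X : Cx R) (n i m : ℤ) (h : n + i = m) :
    ((CategoryTheory.shiftFunctor (Cx R) n).obj X).homology i ≅ X.homology m :=
  (CochainComplex.ShiftSequence.shiftIso (ModuleCat.{0} R) n i m h).app X

noncomputable def singleShiftIso (A : ModuleCat.{0} R) (n r : ℤ) (h : r + n = 0) :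
    (CategoryTheory.shiftFunctor (Cx R) n).obj (SGL 0 A) ≅ SGL r A := by
  refine HomologicalComplex.Hom.isoOfComponents (fun i =>
    if hi : i = r then
      ((SGL 0 A).XIsoOfEq (show i + n = 0 by omega)) ≪≫
        HomologicalComplex.singleObjXSelf (ComplexShape.up ℤ) 0 A ≪≫
        (HomologicalComplex.singleObjXSelf (ComplexShape.up ℤ) r A).symm ≪≫
        ((SGL r A).XIsoOfEq hi.symm)
    else
      IsZero.iso
        (HomologicalComplex.isZero_single_obj_X (ComplexShape.up ℤ) 0 A (i+n) (by omega))
        (HomologicalComplex.isZero_single_obj_X (ComplexShape.up ℤ) r A i hi)) ?_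
  intro i j _
  have h1 : (SGL r A).d i j = 0 := HomologicalComplex.single_obj_d _ _ _ _ _
  have h2 : ((CategoryTheory.shiftFunctor (Cx R) n).obj (SGL 0 A)).d i j = 0 := by
    rw [CochainComplex.shiftFunctor_obj_d', HomologicalComplex.single_obj_d, smul_zero]
    rfl
  rw [h1, h2, comp_zero, zero_comp]

lemma not_nv_of_exact (W : Cx R) (hex : ∀ i : ℤ, i ≤ 0 → W.ExactAt i) : ¬ Nv W := by
  rintro ⟨g, hg⟩
  have h1 : g.f 0 ≫ W.d 0 1 = 0 := by
    rw [HomologicalComplex.Hom.comm, kRes_d01, zero_comp]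
  obtain ⟨h0, hh0⟩ := lift_step' W (show (-1:ℤ)+1 = 0 by norm_num)
    (show (0:ℤ)+1 = 1 by norm_num) (hex 0 le_rfl) _ h1
  exact hg (ml W (fun i hi => hex i (by omega)) g h0 hh0)

lemma cxDepth_eq (Y : Cx R) (m : ℤ)
    (h1 : Nv ((CategoryTheory.shiftFunctor (Cx R) m).obj Y))
    (h2 : ∀ n : ℤ, n < m → ¬ Nv ((CategoryTheory.shiftFunctor (Cx R) n).obj Y)) :
    cxDepth R Y = ((m : ℤ) : WithTop ℤ) := by
  unfold cxDepth
  rw [cxDepth_set_eq]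
  have hlb : ∀ e ∈ {e : WithTop ℤ | ∃ n : ℤ, e = (n : ℤ) ∧
      Nv ((CategoryTheory.shiftFunctor (Cx R) n).obj Y)}, ((m:ℤ) : WithTop ℤ) ≤ e := by
    rintro e ⟨n, rfl, hn⟩
    exact_mod_cast not_lt.1 fun hlt => h2 n hlt hn
  exact le_antisymm (csInf_le ⟨_, hlb⟩ ⟨m, rfl, h1⟩) (le_csInf ⟨_, ⟨m, rfl, h1⟩⟩ hlb)

lemma exists_nv_le (Y : Cx R) (h : cxDepth R Y ≤ 1) :
    ∃ n : ℤ, n ≤ 1 ∧ Nv ((CategoryTheory.shiftFunctor (Cx R) n).obj Y) := by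
  by_contra hc
  push_neg at hc
  unfold cxDepth at h
  rw [cxDepth_set_eq] at h
  rcases Set.eq_empty_or_nonempty {e : WithTop ℤ | ∃ n : ℤ, e = (n : ℤ) ∧
      Nv ((CategoryTheory.shiftFunctor (Cx R) n).obj Y)} with hS | hS
  · rw [hS, WithTop.sInf_empty] at h
    exact absurd h (by norm_num)
  · have h2 : (((2:ℤ)) : WithTop ℤ) ≤ sInf {e : WithTop ℤ | ∃ n : ℤ, e = (n : ℤ) ∧
        Nv ((CategoryTheory.shiftFunctor (Cx R) n).obj Y)} := by
      refine le_csInf hS ?_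
      rintro e ⟨n, rfl, hn⟩
      have : ¬ (n ≤ 1) := fun hle => hc n hle hn
      exact_mod_cast (by omega : (2:ℤ) ≤ n)
    have h21 : (((2:ℤ)) : WithTop ℤ) ≤ 1 := le_trans h2 h
    norm_num at h21

end Stmt5

/-- If `X` is a homologically bounded complex of finitely generated modules
with `s = sup X := sup{n : H_n(X) ≠ 0} < ∞` (homological indexing, so `H_n(X)` is the
cohomology in degree `-n` of the cochain complex `X`) and `depth_R H_s(X) ≤ 1`, then
`depth_R X = depth_R H_s(X) − s`. -/
theorem stmt5
    (R : Type) [CommRing R] [IsNoetherianRing R] [IsLocalRing R]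
    (X : Cx R) (hfgen : ∀ n : ℤ, Module.Finite R (X.X n))
    (hbdd : ∃ a : ℤ, ∀ n : ℤ, a < n → Subsingleton (X.homology n))
    (s : ℤ)
    (hs : Nontrivial (X.homology (-s)))
    (hsup : ∀ n : ℤ, s < n → Subsingleton (X.homology (-n)))
    (hdep : sDepthM R (X.homology (-s)) ≤ 1) :
    cxDepth R X + (s : ℤ) = sDepthM R (X.homology (-s)) := by
  have hexX : ∀ j : ℤ, j < -s → X.ExactAt j := by
    intro j hj
    rw [HomologicalComplex.exactAt_iff_isZero_homology]
    have hsub := hsup (-j) (by omega)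
    rw [neg_neg] at hsub
    exact ModuleCat.isZero_of_subsingleton _
  have hexW0 : ∀ i : ℤ, i ≤ -1 →
      ((CategoryTheory.shiftFunctor (Cx R) (-s)).obj X).ExactAt i :=
    fun i hi => Stmt5.exactAt_shift X (-s) i (hexX (-s + i) (by omega))
  have hexW1 : ∀ i : ℤ, i ≤ -2 →
      ((CategoryTheory.shiftFunctor (Cx R) (1-s)).obj X).ExactAt i :=
    fun i hi => Stmt5.exactAt_shift X (1-s) i (hexX ((1-s) + i) (by omega))
  have A1 : ∀ n : ℤ, n < -s → ¬ Stmt5.Nv ((CategoryTheory.shiftFunctor (Cx R) n).obj X) :=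
    fun n hn => Stmt5.not_nv_of_exact _
      (fun i hi => Stmt5.exactAt_shift X n i (hexX (n + i) (by omega)))
  have iso0 : ((CategoryTheory.shiftFunctor (Cx R) (-s)).obj X).homology 0 ≅ X.homology (-s) :=
    Stmt5.homologyShiftIso X (-s) 0 (-s) (by omega)
  have iso1 : ((CategoryTheory.shiftFunctor (Cx R) (1-s)).obj X).homology (-1) ≅
      X.homology (-s) := Stmt5.homologyShiftIso X (1-s) (-1) (-s) (by omega)
  have A2 : Stmt5.Nv ((CategoryTheory.shiftFunctor (Cx R) (-s)).obj X) ↔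
      Stmt5.Nv (Stmt5.SGL 0 (X.homology (-s))) :=
    (Stmt5.k1 _ hexW0).trans (Stmt5.nv_iff_of_iso
      ((HomologicalComplex.single (ModuleCat.{0} R) (ComplexShape.up ℤ) 0).mapIso iso0))
  have A3 : Stmt5.Nv ((CategoryTheory.shiftFunctor (Cx R) (1:ℤ)).obj
        (Stmt5.SGL 0 (X.homology (-s)))) →
      Stmt5.Nv ((CategoryTheory.shiftFunctor (Cx R) (1-s)).obj X) := by
    intro h
    refine Stmt5.k2 _ hexW1 ?_
    have h' := (Stmt5.nv_iff_of_iso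
      (Stmt5.singleShiftIso (X.homology (-s)) 1 (-1) (by norm_num))).1 h
    exact (Stmt5.nv_iff_of_iso ((HomologicalComplex.single (ModuleCat.{0} R)
      (ComplexShape.up ℤ) (-1)).mapIso iso1.symm)).1 h'
  have A4 : ∀ n : ℤ, n < 0 → ¬ Stmt5.Nv ((CategoryTheory.shiftFunctor (Cx R) n).obj
      (Stmt5.SGL 0 (X.homology (-s)))) := by
    intro n hn h
    exact Stmt5.nv_sgl_pos (-n) (by omega) _
      ((Stmt5.nv_iff_of_iso (Stmt5.singleShiftIso _ n (-n) (by omega))).1 h)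
  have hsd : sDepthM R (X.homology (-s)) = cxDepth R (Stmt5.SGL 0 (X.homology (-s))) := rfl
  obtain ⟨n₀, hn₀le, hn₀⟩ := Stmt5.exists_nv_le _ (le_of_eq_of_le hsd.symm hdep)
  have hn₀0 : 0 ≤ n₀ := le_of_not_gt (fun h => A4 n₀ h hn₀)
  have ziso := (CategoryTheory.shiftFunctorZero (Cx R) ℤ).app (Stmt5.SGL 0 (X.homology (-s)))
  by_cases h0 : Stmt5.Nv ((CategoryTheory.shiftFunctor (Cx R) (0:ℤ)).obj
    (Stmt5.SGL 0 (X.homology (-s))))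
  · have hM : cxDepth R (Stmt5.SGL 0 (X.homology (-s))) = ((0:ℤ) : WithTop ℤ) :=
      Stmt5.cxDepth_eq _ 0 h0 A4
    have hX : cxDepth R X = ((-s : ℤ) : WithTop ℤ) :=
      Stmt5.cxDepth_eq X (-s) (A2.2 ((Stmt5.nv_iff_of_iso ziso).1 h0)) A1
    rw [hX, hsd, hM]
    exact_mod_cast congrArg (fun t : ℤ => ((t : ℤ) : WithTop ℤ)) (by omega : -s + s = 0)
  · have hn₀1 : n₀ = 1 := by
      have : n₀ ≠ 0 := fun h => h0 (h ▸ hn₀)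
      omega
    subst hn₀1
    have hM : cxDepth R (Stmt5.SGL 0 (X.homology (-s))) = ((1:ℤ) : WithTop ℤ) := by
      refine Stmt5.cxDepth_eq _ 1 hn₀ (fun n hn => ?_)
      rcases (by omega : n < 0 ∨ n = 0) with h | rfl
      · exact A4 n h
      · exact h0
    have hX : cxDepth R X = ((1 - s : ℤ) : WithTop ℤ) := by
      refine Stmt5.cxDepth_eq X (1-s) (A3 hn₀) (fun n hn => ?_)
      rcases (by omega : n < -s ∨ n = -s) with h | rfl
      · exact A1 n h
      · exact fun hnv => h0 ((Stmt5.nv_iff_of_iso ziso).2 (A2.1 hnv))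
    rw [hX, hsd, hM]
    exact_mod_cast congrArg (fun t : ℤ => ((t : ℤ) : WithTop ℤ)) (by omega : 1 - s + s = 1)
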